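/- arXiv:math/0012106 — 3 statements merged into one kernel-verified Lean document; each statement's English description precedes it below -/
import Mathlib

section
/- For h ∈ Hom(Λ^pΦ, Φ), the lift h̄ defined by h̄(φ₁∧⋯∧φ_n) = Σ_{(p,n−p)-unshuffles σ} h(φ_{σ(1)}∧⋯∧φ_{σ(p)}) ∧ φ_{σ(p+1)} ∧⋯∧ φ_{σ(n)} coincides with m∘(h⊗1)∘Δ and is a coderivation on Λ*Φ. -/
open TensorProduct

noncomputable section

/-- A *coderivation* on a coalgebra `(C, Δ)`: `Δ ∘ Θ = (Θ ⊗ 1 + 1 ⊗ Θ) ∘ Δ`. -/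
def IsCoderivation {A C : Type*} [CommRing A] [AddCommGroup C] [Module A C]
    (Δ : C →ₗ[A] C ⊗[A] C) (Θ : C →ₗ[A] C) : Prop :=
  Δ ∘ₗ Θ = (LinearMap.rTensor C Θ + LinearMap.lTensor C Θ) ∘ₗ Δ

/-- An axiomatization of the cofree nilpotent (graded co)commutative coalgebra `Λ*Φ`
cogenerated by `Φ`, together with its wedge product `m`, unit `one`, counit `ε`,
inclusion `ι` of the cogenerators and projection `p` onto the cogenerators.
The field `cofree_coder` expresses cofreeness: a coderivation is determined by its
corestriction to the cogenerators. -/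
structure WedgeBialgebra (A : Type*) (Φ : Type*) (C : Type*) [CommRing A]
    [AddCommGroup Φ] [Module A Φ] [AddCommGroup C] [Module A C] where
  Δ : C →ₗ[A] C ⊗[A] C
  ε : C →ₗ[A] A
  m : C ⊗[A] C →ₗ[A] C
  one : C
  ι : Φ →ₗ[A] C
  p : C →ₗ[A] Φ
  coassoc : (TensorProduct.assoc A C C C).toLinearMap ∘ₗ (LinearMap.rTensor C Δ) ∘ₗ Δ
      = (LinearMap.lTensor C Δ) ∘ₗ Δ
  cocomm : (TensorProduct.comm A C C).toLinearMap ∘ₗ Δ = Δ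
  counit_left : ∀ x : C, (TensorProduct.lid A C) ((LinearMap.rTensor C ε) (Δ x)) = x
  counit_right : ∀ x : C, (TensorProduct.rid A C) ((LinearMap.lTensor C ε) (Δ x)) = x
  mul_compat : Δ ∘ₗ m = (TensorProduct.map m m) ∘ₗ
      (TensorProduct.tensorTensorTensorComm A C C C C).toLinearMap ∘ₗ (TensorProduct.map Δ Δ)
  one_mul : ∀ x : C, m (one ⊗ₜ x) = x
  mul_one : ∀ x : C, m (x ⊗ₜ one) = x
  mul_assoc : ∀ x y z : C, m (m (x ⊗ₜ y) ⊗ₜ z) = m (x ⊗ₜ m (y ⊗ₜ z))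
  Δ_one : Δ one = one ⊗ₜ one
  ε_one : ε one = 1
  ε_mul : ∀ x y : C, ε (m (x ⊗ₜ y)) = ε x * ε y
  Δ_ι : ∀ φ : Φ, Δ (ι φ) = ι φ ⊗ₜ one + one ⊗ₜ ι φ
  ε_ι : ∀ φ : Φ, ε (ι φ) = 0
  p_ι : ∀ φ : Φ, p (ι φ) = φ
  p_one : p one = 0
  p_mul : ∀ x y : C, p (m (x ⊗ₜ y)) = ε x • p y + ε y • p x
  cofree_coder : ∀ Θ : C →ₗ[A] C, IsCoderivation Δ Θ → p ∘ₗ Θ = 0 → Θ = 0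

namespace WedgeBialgebra

variable {A Φ C : Type*} [CommRing A] [AddCommGroup Φ] [Module A Φ]
  [AddCommGroup C] [Module A C] (W : WedgeBialgebra A Φ C)

/-- The lift `h̄ = m ∘ (h ⊗ 1) ∘ Δ : Λ*Φ → Λ*Φ` of `h : Λ*Φ → Φ`. -/
def coderOf (h : C →ₗ[A] Φ) : C →ₗ[A] C :=
  W.m ∘ₗ (LinearMap.rTensor C (W.ι ∘ₗ h)) ∘ₗ W.Δ

/-- The Gerstenhaber comp operation `f ⊙ g = f ∘ ḡ`. -/
def gcomp (f g : C →ₗ[A] Φ) : C →ₗ[A] Φ := f ∘ₗ W.coderOf g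

/-- The Gerstenhaber bracket `[f,g] = f ∘ ḡ − g ∘ f̄` on `Hom(Λ*Φ, Φ)`. -/
def gbracket (f g : C →ₗ[A] Φ) : C →ₗ[A] Φ := W.gcomp f g - W.gcomp g f

end WedgeBialgebra

/-- The wedge word `φ₁ ∧ ⋯ ∧ φ_n ∈ Λ*Φ` of a family of elements of `Φ`. -/
noncomputable def WedgeBialgebra.wedgeFam {A Φ C : Type*} [CommRing A] [AddCommGroup Φ] [Module A Φ]
  [AddCommGroup C] [Module A C] (W : WedgeBialgebra A Φ C) : ∀ {n : ℕ}, (Fin n → Φ) → C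
  | 0, _ => W.one
  | _ + 1, φ => W.m (W.ι (φ 0) ⊗ₜ WedgeBialgebra.wedgeFam W fun i => φ i.succ)

namespace WedgeBialgebra

variable {A Φ C : Type*} [CommRing A] [AddCommGroup Φ] [Module A Φ]
  [AddCommGroup C] [Module A C] (W : WedgeBialgebra A Φ C)

section Parameters

variable {Ξ : Type*} [AddCommGroup Ξ] [Module A Ξ]

/-- A gauge parameter `ξ ∈ Ξ` viewed as the element of `Hom(Λ*Φ, Ξ)` supported on
the scalars, with value `ξ` at `1`. -/
def constPar (ξ : Ξ) : C →ₗ[A] Ξ := (LinearMap.toSpanSingleton A Ξ ξ) ∘ₗ W.ε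

/-- The extension `δ̂(π) = ev ∘ (δ∘π ⊗ 1) ∘ Δ` of `δ : Ξ → Hom(Λ*Φ,Φ)`
to `Hom(Λ*Φ, Ξ)`. -/
def deltaHat (δ : Ξ →ₗ[A] (C →ₗ[A] Φ)) (π : C →ₗ[A] Ξ) : C →ₗ[A] Φ :=
  (TensorProduct.lift (δ ∘ₗ π)) ∘ₗ W.Δ

/-- The extension `Ĉ(π₁,π₂) = C ∘ ((π₁⊗π₂)⊗1) ∘ (Δ⊗1) ∘ Δ` of the correction term
`C : Ξ ⊗ Ξ → Hom(Λ*Φ,Ξ)`. -/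
def cHat (Cm : Ξ →ₗ[A] Ξ →ₗ[A] (C →ₗ[A] Ξ)) (π₁ π₂ : C →ₗ[A] Ξ) : C →ₗ[A] Ξ :=
  (TensorProduct.lift (TensorProduct.lift ((Cm ∘ₗ π₁).compl₂ π₂))) ∘ₗ
    (LinearMap.rTensor C W.Δ) ∘ₗ W.Δ

/-- The corrected bracket `[π₁,π₂] = π₁⊙δ̂(π₂) − π₂⊙δ̂(π₁) + Ĉ(π₁,π₂)`
on `Hom(Λ*Φ, Ξ)`. -/
def parBracket (δ : Ξ →ₗ[A] (C →ₗ[A] Φ)) (Cm : Ξ →ₗ[A] Ξ →ₗ[A] (C →ₗ[A] Ξ))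
    (π₁ π₂ : C →ₗ[A] Ξ) : C →ₗ[A] Ξ :=
  π₁ ∘ₗ W.coderOf (W.deltaHat δ π₂) - π₂ ∘ₗ W.coderOf (W.deltaHat δ π₁) + W.cHat Cm π₁ π₂

end Parameters

end WedgeBialgebra




namespace WedgeBialgebra

open LinearMap

variable {A Φ C : Type*} [CommRing A] [AddCommGroup Φ] [Module A Φ]
  [AddCommGroup C] [Module A C] (W : WedgeBialgebra A Φ C)

private lemma ext3' {D : Type*} [AddCommGroup D] [Module A D]
    {f g : C ⊗[A] (C ⊗[A] C) →ₗ[A] D}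
    (H : ∀ a b c : C, f (a ⊗ₜ (b ⊗ₜ c)) = g (a ⊗ₜ (b ⊗ₜ c))) : f = g := by
  apply TensorProduct.ext'
  intro a z
  induction z using TensorProduct.induction_on with
  | zero => simp
  | tmul b c => exact H a b c
  | add u v hu hv => rw [tmul_add, map_add, map_add, hu, hv]

theorem coderOf_isCoderivation (h : C →ₗ[A] Φ) : IsCoderivation W.Δ (W.coderOf h) := by
  classical
  set g : C →ₗ[A] C := W.ι ∘ₗ h with hgdef
  set j₁ : C →ₗ[A] C ⊗[A] C := (TensorProduct.mk A C C).flip W.one with hj₁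
  set j₂ : C →ₗ[A] C ⊗[A] C := TensorProduct.mk A C C W.one with hj₂
  have hΔg : W.Δ ∘ₗ g = j₁ ∘ₗ g + j₂ ∘ₗ g := by
    ext c
    simp [hgdef, hj₁, hj₂, W.Δ_ι]
  set Pm : (C ⊗[A] C) ⊗[A] (C ⊗[A] C) →ₗ[A] C ⊗[A] C :=
    TensorProduct.map W.m W.m ∘ₗ (TensorProduct.tensorTensorTensorComm A C C C C).toLinearMap
    with hPm
  have LemA : Pm ∘ₗ TensorProduct.map j₁ LinearMap.id
      = rTensor C W.m ∘ₗ (TensorProduct.assoc A C C C).symm.toLinearMap := by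
    apply ext3'
    intro a b c
    simp [hPm, hj₁, W.one_mul]
  have LemB : Pm ∘ₗ TensorProduct.map j₂ LinearMap.id
      = lTensor C W.m ∘ₗ (TensorProduct.assoc A C C C).toLinearMap
        ∘ₗ rTensor C (TensorProduct.comm A C C).toLinearMap
        ∘ₗ (TensorProduct.assoc A C C C).symm.toLinearMap := by
    apply ext3'
    intro a b c
    simp [hPm, hj₂, W.one_mul]
  have LemA2 : (TensorProduct.assoc A C C C).symm.toLinearMap
        ∘ₗ rTensor (C ⊗[A] C) g ∘ₗ (TensorProduct.assoc A C C C).toLinearMap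
      = rTensor C (rTensor C g) := by
    apply TensorProduct.ext_threefold
    intro x y z
    simp
  have LemB2 : (lTensor C W.m ∘ₗ (TensorProduct.assoc A C C C).toLinearMap
        ∘ₗ rTensor C (TensorProduct.comm A C C).toLinearMap
        ∘ₗ (TensorProduct.assoc A C C C).symm.toLinearMap)
        ∘ₗ rTensor (C ⊗[A] C) g ∘ₗ (TensorProduct.assoc A C C C).toLinearMap
      = lTensor C (W.m ∘ₗ rTensor C g) ∘ₗ (TensorProduct.assoc A C C C).toLinearMap
        ∘ₗ rTensor C (TensorProduct.comm A C C).toLinearMap := by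
    apply TensorProduct.ext_threefold
    intro x y z
    simp
  unfold IsCoderivation
  apply LinearMap.ext
  intro x
  set u := W.Δ x with hu
  set w := rTensor C W.Δ u with hwdef
  have hcoassoc : lTensor C W.Δ u = (TensorProduct.assoc A C C C) w := by
    have h1 := DFunLike.congr_fun W.coassoc x
    simp only [LinearMap.comp_apply, LinearEquiv.coe_coe] at h1
    rw [← hu] at h1
    rw [← h1, hwdef]
  have hcomm : rTensor C (TensorProduct.comm A C C).toLinearMap w = w := by
    rw [hwdef, ← LinearMap.comp_apply, ← LinearMap.rTensor_comp, W.cocomm]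
  -- left side
  have hmg : TensorProduct.map g W.Δ u = rTensor (C ⊗[A] C) g ((TensorProduct.assoc A C C C) w) := by
    have : TensorProduct.map g W.Δ = rTensor (C ⊗[A] C) g ∘ₗ lTensor C W.Δ := by
      rw [rTensor, lTensor, ← TensorProduct.map_comp]
      simp
    rw [this, LinearMap.comp_apply, hcoassoc]
  have key : W.Δ (W.coderOf h x)
      = rTensor C (W.coderOf h) u + lTensor C (W.coderOf h) u := by
    have h0 : W.coderOf h x = W.m (rTensor C g u) := rfl
    rw [h0]
    have hm := DFunLike.congr_fun W.mul_compat (rTensor C g u)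
    simp only [LinearMap.comp_apply, LinearEquiv.coe_coe] at hm
    rw [hm]
    have hsplit : TensorProduct.map W.Δ W.Δ (rTensor C g u)
        = TensorProduct.map j₁ LinearMap.id (TensorProduct.map g W.Δ u)
          + TensorProduct.map j₂ LinearMap.id (TensorProduct.map g W.Δ u) := by
      rw [← LinearMap.comp_apply (TensorProduct.map W.Δ W.Δ)]
      rw [show TensorProduct.map W.Δ W.Δ ∘ₗ rTensor C g = TensorProduct.map (W.Δ ∘ₗ g) W.Δ by
        rw [rTensor, ← TensorProduct.map_comp]; simp]
      rw [hΔg, TensorProduct.map_add_left]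
      rw [show TensorProduct.map (j₁ ∘ₗ g) W.Δ = TensorProduct.map j₁ LinearMap.id ∘ₗ TensorProduct.map g W.Δ by
        rw [← TensorProduct.map_comp]; simp]
      rw [show TensorProduct.map (j₂ ∘ₗ g) W.Δ = TensorProduct.map j₂ LinearMap.id ∘ₗ TensorProduct.map g W.Δ by
        rw [← TensorProduct.map_comp]; simp]
      simp [LinearMap.add_apply, LinearMap.comp_apply]
    rw [hsplit]
    have htermA : Pm (TensorProduct.map j₁ LinearMap.id (TensorProduct.map g W.Δ u))
        = rTensor C (W.coderOf h) u := by
      rw [← LinearMap.comp_apply Pm, LemA, hmg]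
      simp only [LinearMap.comp_apply, LinearEquiv.coe_coe]
      have := DFunLike.congr_fun LemA2 w
      simp only [LinearMap.comp_apply, LinearEquiv.coe_coe] at this
      rw [this, hwdef]
      rw [← LinearMap.comp_apply (rTensor C W.m), ← LinearMap.rTensor_comp]
      rw [← LinearMap.comp_apply, ← LinearMap.rTensor_comp]
      rfl
    have htermB : Pm (TensorProduct.map j₂ LinearMap.id (TensorProduct.map g W.Δ u))
        = lTensor C (W.coderOf h) u := by
      rw [← LinearMap.comp_apply Pm, LemB, hmg]
      have := DFunLike.congr_fun LemB2 w
      simp only [LinearMap.comp_apply, LinearEquiv.coe_coe] at this ⊢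
      rw [this, hcomm, ← hcoassoc]
      rw [← LinearMap.comp_apply (lTensor C (W.m ∘ₗ rTensor C g)), ← LinearMap.lTensor_comp]
      rfl
    have eA := htermA
    have eB := htermB
    simp only [hPm, LinearMap.comp_apply, LinearEquiv.coe_coe] at eA eB
    simp only [map_add]
    rw [eA, eB]
  simpa [LinearMap.comp_apply, LinearMap.add_apply] using key

-- ############ Part 1: Δ on wedge words ############

def wedgeSub {n : ℕ} (φ : Fin n → Φ) (S : Finset (Fin n)) : C :=
  W.wedgeFam (fun i : Fin S.card => φ (S.orderEmbOfFin rfl i))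

lemma wedgeSub_eq_of_strictMono {n k : ℕ} (φ : Fin n → Φ) (S : Finset (Fin n))
    (hc : S.card = k) (f : Fin k → Fin n) (hf : StrictMono f) (hmem : ∀ i, f i ∈ S) :
    W.wedgeSub φ S = W.wedgeFam (fun i => φ (f i)) := by
  subst hc
  rw [Finset.orderEmbOfFin_unique rfl hmem hf]
  rfl

lemma wedgeSub_of_card_zero {n : ℕ} (φ : Fin n → Φ) (S : Finset (Fin n))
    (hc : S.card = 0) : W.wedgeSub φ S = W.one := by
  rw [W.wedgeSub_eq_of_strictMono φ S hc Fin.elim0 (by intro a; exact a.elim0)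
    (fun a => a.elim0)]
  rfl

lemma wedgeSub_map_succ {n : ℕ} (φ : Fin (n + 1) → Φ) (T : Finset (Fin n)) :
    W.wedgeSub φ (T.map ⟨Fin.succ, Fin.succ_injective n⟩) = W.wedgeSub (fun i => φ i.succ) T := by
  rw [W.wedgeSub_eq_of_strictMono φ _ (Finset.card_map _)
    (fun i => Fin.succ (T.orderEmbOfFin rfl i))
    (fun a b hab => Fin.succ_lt_succ_iff.2 ((T.orderEmbOfFin rfl).strictMono hab))
    (fun i => Finset.mem_map.2 ⟨T.orderEmbOfFin rfl i, Finset.orderEmbOfFin_mem T rfl i, rfl⟩)]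
  rfl

lemma wedgeSub_insert_zero {n : ℕ} (φ : Fin (n + 1) → Φ) (T : Finset (Fin n)) :
    W.wedgeSub φ (insert 0 (T.map ⟨Fin.succ, Fin.succ_injective n⟩))
      = W.m (W.ι (φ 0) ⊗ₜ[A] W.wedgeSub (fun i => φ i.succ) T) := by
  have h0 : (0 : Fin (n+1)) ∉ T.map ⟨Fin.succ, Fin.succ_injective n⟩ := by
    simp only [Finset.mem_map, Function.Embedding.coeFn_mk]
    rintro ⟨a, -, ha⟩
    exact Fin.succ_ne_zero a ha
  have hc : (insert (0 : Fin (n+1)) (T.map ⟨Fin.succ, Fin.succ_injective n⟩)).card = T.card + 1 := by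
    rw [Finset.card_insert_of_notMem h0, Finset.card_map]
  set f : Fin (T.card + 1) → Fin (n + 1) :=
    fun i => Fin.cases 0 (fun j => Fin.succ (T.orderEmbOfFin rfl j)) i with hfdef
  have hmono : StrictMono f := by
    intro a b hab
    induction b using Fin.cases with
    | zero => exact absurd hab (Fin.not_lt_zero a)
    | succ j =>
      induction a using Fin.cases with
      | zero =>
        simp only [hfdef, Fin.cases_zero, Fin.cases_succ]
        exact Fin.succ_pos _
      | succ i =>
        simp only [hfdef, Fin.cases_succ]
        exact Fin.succ_lt_succ_iff.2 ((T.orderEmbOfFin rfl).strictMono (Fin.succ_lt_succ_iff.1 hab))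
  have hmem : ∀ i, f i ∈ insert (0 : Fin (n+1)) (T.map ⟨Fin.succ, Fin.succ_injective n⟩) := by
    intro i
    induction i using Fin.cases with
    | zero => exact Finset.mem_insert_self _ _
    | succ j =>
      refine Finset.mem_insert_of_mem (Finset.mem_map.2 ⟨T.orderEmbOfFin rfl j,
        Finset.orderEmbOfFin_mem T rfl j, rfl⟩)
  rw [W.wedgeSub_eq_of_strictMono φ _ hc f hmono hmem]
  show W.m (W.ι (φ (f 0)) ⊗ₜ[A] W.wedgeFam fun i => φ (f i.succ)) = _
  simp only [hfdef, Fin.cases_zero, Fin.cases_succ]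
  rfl

lemma compl_insert_zero {n : ℕ} (T : Finset (Fin n)) :
    (insert (0 : Fin (n+1)) (T.map ⟨Fin.succ, Fin.succ_injective n⟩))ᶜ
      = Tᶜ.map ⟨Fin.succ, Fin.succ_injective n⟩ := by
  ext x
  induction x using Fin.cases with
  | zero =>
    rw [Finset.mem_compl]
    refine iff_of_false (fun hx => hx (Finset.mem_insert_self _ _)) ?_
    intro hx
    obtain ⟨a, -, ha⟩ := Finset.mem_map.1 hx
    exact Fin.succ_ne_zero a ha
  | succ y =>
    simp [Finset.mem_compl, Finset.mem_map, Fin.succ_ne_zero, Fin.succ_inj,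
      (Fin.succ_ne_zero _).symm]

lemma compl_map_succ {n : ℕ} (T : Finset (Fin n)) :
    (T.map ⟨Fin.succ, Fin.succ_injective n⟩)ᶜ
      = insert (0 : Fin (n+1)) (Tᶜ.map ⟨Fin.succ, Fin.succ_injective n⟩) := by
  have := compl_insert_zero (n := n) Tᶜ
  rw [compl_eq_comm] at this
  rw [← this, compl_compl]

lemma Δ_wedgeFam : ∀ {n : ℕ} (φ : Fin n → Φ),
    W.Δ (W.wedgeFam φ) = ∑ S : Finset (Fin n), W.wedgeSub φ S ⊗ₜ[A] W.wedgeSub φ Sᶜ := by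
  intro n
  induction n with
  | zero =>
    intro φ
    rw [Fintype.sum_eq_single (∅ : Finset (Fin 0))
      (fun S hS => absurd (Finset.eq_empty_of_isEmpty S) hS)]
    rw [W.wedgeSub_of_card_zero φ ∅ Finset.card_empty,
      W.wedgeSub_of_card_zero φ ∅ᶜ (by simp)]
    exact W.Δ_one
  | succ n ih =>
    intro φ
    set ψ : Fin n → Φ := fun i => φ i.succ with hψ
    have h0 : W.wedgeFam φ = W.m (W.ι (φ 0) ⊗ₜ[A] W.wedgeFam ψ) := rfl
    have hΔ : W.Δ (W.wedgeFam φ) =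
        ∑ T : Finset (Fin n), (W.m (W.ι (φ 0) ⊗ₜ[A] W.wedgeSub ψ T) ⊗ₜ[A] W.wedgeSub ψ Tᶜ
          + W.wedgeSub ψ T ⊗ₜ[A] W.m (W.ι (φ 0) ⊗ₜ[A] W.wedgeSub ψ Tᶜ)) := by
      rw [h0]
      have hm := DFunLike.congr_fun W.mul_compat (W.ι (φ 0) ⊗ₜ[A] W.wedgeFam ψ)
      simp only [LinearMap.comp_apply, LinearEquiv.coe_coe, TensorProduct.map_tmul] at hm
      rw [hm, W.Δ_ι, ih ψ]
      rw [TensorProduct.add_tmul]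
      simp only [TensorProduct.tmul_sum, map_add, map_sum, tensorTensorTensorComm_tmul,
        TensorProduct.map_tmul, W.one_mul]
      rw [← Finset.sum_add_distrib]
    rw [hΔ]
    classical
    rw [← Finset.sum_filter_add_sum_filter_not Finset.univ (fun S => (0 : Fin (n+1)) ∈ S)
      (fun S => W.wedgeSub φ S ⊗ₜ[A] W.wedgeSub φ Sᶜ)]
    rw [Finset.sum_add_distrib]
    congr 1
    · refine Finset.sum_bij'
        (fun T _ => insert (0 : Fin (n+1)) (T.map ⟨Fin.succ, Fin.succ_injective n⟩))
        (fun S _ => S.preimage Fin.succ (Fin.succ_injective n).injOn) ?_ ?_ ?_ ?_ ?_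
      · intro T _
        simp [Finset.mem_filter]
      · intro S _
        exact Finset.mem_univ _
      · intro T _
        ext y
        simp [Finset.mem_preimage, Finset.mem_insert, Finset.mem_map,
          Fin.succ_ne_zero, Fin.succ_inj]
      · intro S hS
        rw [Finset.mem_filter] at hS
        ext x
        induction x using Fin.cases with
        | zero => simp [Finset.mem_insert, hS.2]
        | succ y =>
          simp [Finset.mem_insert, Finset.mem_map, Finset.mem_preimage,
            Fin.succ_ne_zero, Fin.succ_inj]
      · intro T _
        rw [W.wedgeSub_insert_zero φ T, compl_insert_zero, W.wedgeSub_map_succ φ Tᶜ]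
    · refine Finset.sum_bij'
        (fun T _ => T.map ⟨Fin.succ, Fin.succ_injective n⟩)
        (fun S _ => S.preimage Fin.succ (Fin.succ_injective n).injOn) ?_ ?_ ?_ ?_ ?_
      · intro T _
        simp only [Finset.mem_filter, Finset.mem_univ, true_and, Finset.mem_map,
          Function.Embedding.coeFn_mk]
        rintro ⟨a, -, ha⟩
        exact Fin.succ_ne_zero a ha
      · intro S _
        exact Finset.mem_univ _
      · intro T _
        ext y
        simp [Finset.mem_preimage, Finset.mem_map, Fin.succ_inj]
      · intro S hS
        rw [Finset.mem_filter] at hS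
        ext x
        induction x using Fin.cases with
        | zero =>
          simp only [Finset.mem_map, Finset.mem_preimage, Function.Embedding.coeFn_mk]
          constructor
          · rintro ⟨a, -, ha⟩; exact (Fin.succ_ne_zero a ha).elim
          · intro hmem; exact absurd hmem hS.2
        | succ y =>
          simp [Finset.mem_map, Finset.mem_preimage, Fin.succ_inj]
      · intro T _
        rw [W.wedgeSub_map_succ φ T, compl_map_succ, W.wedgeSub_insert_zero φ Tᶜ]

end WedgeBialgebra

/-- A `(p, q)`-unshuffle of `{1, …, p+q}`. -/
def IsUnshuffle (p q : ℕ) (σ : Equiv.Perm (Fin (p + q))) : Prop :=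
  StrictMono (fun i : Fin p => σ (Fin.castAdd q i)) ∧
    StrictMono (fun i : Fin q => σ (Fin.natAdd p i))

section UnshuffleAux

variable {p q : ℕ}

noncomputable def unshufflePerm (S : Finset (Fin (p + q))) (hS : S.card = p)
    (hSc : Sᶜ.card = q) : Equiv.Perm (Fin (p + q)) :=
  finSumFinEquiv.symm.trans <|
    (Equiv.sumCongr (S.orderIsoOfFin hS).toEquiv ((Sᶜ).orderIsoOfFin hSc).toEquiv).trans <|
    ((Equiv.refl {x // x ∈ S}).sumCongr (Equiv.subtypeEquivRight (fun x => Finset.mem_compl))).trans <|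
    Equiv.sumCompl (· ∈ S)

lemma unshufflePerm_castAdd (S : Finset (Fin (p + q))) (hS : S.card = p)
    (hSc : Sᶜ.card = q) (i : Fin p) :
    unshufflePerm S hS hSc (Fin.castAdd q i) = S.orderEmbOfFin hS i := by
  simp [unshufflePerm, finSumFinEquiv_symm_apply_castAdd]

lemma unshufflePerm_natAdd (S : Finset (Fin (p + q))) (hS : S.card = p)
    (hSc : Sᶜ.card = q) (i : Fin q) :
    unshufflePerm S hS hSc (Fin.natAdd p i) = (Sᶜ).orderEmbOfFin hSc i := by
  simp [unshufflePerm, finSumFinEquiv_symm_apply_natAdd]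

lemma image_orderEmbOfFin {n k : ℕ} (S : Finset (Fin n)) (h : S.card = k) :
    Finset.image (fun i => S.orderEmbOfFin h i) Finset.univ = S := by
  ext x
  simp only [Finset.mem_image, Finset.mem_univ, true_and]
  constructor
  · rintro ⟨i, rfl⟩
    exact Finset.orderEmbOfFin_mem S h i
  · intro hx
    have : x ∈ Set.range (S.orderEmbOfFin h) := by
      rw [Finset.range_orderEmbOfFin]; exact hx
    obtain ⟨i, hi⟩ := this
    exact ⟨i, hi⟩

lemma castAdd_ne_natAdd (j : Fin p) (i : Fin q) : Fin.castAdd q j ≠ Fin.natAdd p i := by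
  intro hcon
  have h1 := congrArg Fin.val hcon
  simp only [Fin.coe_castAdd, Fin.coe_natAdd] at h1
  have h2 := j.2
  omega

lemma mem_image_natAdd_iff (σ : Equiv.Perm (Fin (p + q))) (x : Fin (p + q)) :
    x ∈ Finset.image (fun i : Fin q => σ (Fin.natAdd p i)) Finset.univ
      ↔ x ∉ Finset.image (fun i : Fin p => σ (Fin.castAdd q i)) Finset.univ := by
  simp only [Finset.mem_image, Finset.mem_univ, true_and, not_exists]
  constructor
  · rintro ⟨i, rfl⟩ j hj
    exact castAdd_ne_natAdd j i (σ.injective hj)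
  · intro hx
    obtain ⟨y, hy⟩ := finSumFinEquiv.surjective (σ.symm x)
    cases y with
    | inl j =>
      exact absurd (by rw [← finSumFinEquiv_apply_left (n := q) j, hy, Equiv.apply_symm_apply])
        (hx j)
    | inr i =>
      exact ⟨i, by rw [← finSumFinEquiv_apply_right (m := p) i, hy, Equiv.apply_symm_apply]⟩

end UnshuffleAux


open scoped Classical in
/-- For `h ∈ Hom(Λ^pΦ, Φ)` (i.e. `h` vanishing on words of length
`≠ p`), the lift `h̄ = m ∘ (h ⊗ 1) ∘ Δ` is given on wedge words by the sum over
`(p, n−p)`-unshuffles `h̄(φ₁∧⋯∧φ_n) = Σ_σ h(φ_{σ(1)}∧⋯∧φ_{σ(p)}) ∧ φ_{σ(p+1)}∧⋯∧φ_{σ(n)}`,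
and `h̄` is a coderivation on `Λ*Φ`. -/
theorem lift_eq_unshuffle_sum_and_coderivation (A Φ C : Type*) [CommRing A]
    [AddCommGroup Φ] [Module A Φ] [AddCommGroup C] [Module A C]
    (W : WedgeBialgebra A Φ C) (p : ℕ) (h : C →ₗ[A] Φ)
    (hh : ∀ (k : ℕ) (ψ : Fin k → Φ), k ≠ p → h (W.wedgeFam ψ) = 0) :
    (∀ (q : ℕ) (φ : Fin (p + q) → Φ),
      W.coderOf h (W.wedgeFam φ) =
        ∑ σ : Equiv.Perm (Fin (p + q)),
          if IsUnshuffle p q σ then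
            W.m (W.ι (h (W.wedgeFam fun i : Fin p => φ (σ (Fin.castAdd q i)))) ⊗ₜ
              W.wedgeFam fun i : Fin q => φ (σ (Fin.natAdd p i)))
          else 0) ∧
    IsCoderivation W.Δ (W.coderOf h) := by
  refine ⟨?_, W.coderOf_isCoderivation h⟩
  intro q φ
  have hq : ∀ S : Finset (Fin (p + q)), S.card = p → Sᶜ.card = q := by
    intro S hS
    rw [Finset.card_compl, hS, Fintype.card_fin]
    omega
  have hL : W.coderOf h (W.wedgeFam φ)
      = ∑ S : Finset (Fin (p + q)), W.m (W.ι (h (W.wedgeSub φ S)) ⊗ₜ[A] W.wedgeSub φ Sᶜ) := by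
    show W.m ((LinearMap.rTensor C (W.ι ∘ₗ h)) (W.Δ (W.wedgeFam φ))) = _
    rw [W.Δ_wedgeFam φ, map_sum, map_sum]
    refine Finset.sum_congr rfl fun S _ => ?_
    rw [LinearMap.rTensor_tmul]
    rfl
  rw [hL]
  rw [show (∑ S : Finset (Fin (p + q)), W.m (W.ι (h (W.wedgeSub φ S)) ⊗ₜ[A] W.wedgeSub φ Sᶜ))
      = ∑ S ∈ Finset.univ.filter (fun S : Finset (Fin (p + q)) => S.card = p),
          W.m (W.ι (h (W.wedgeSub φ S)) ⊗ₜ[A] W.wedgeSub φ Sᶜ) from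
    (Finset.sum_subset (Finset.filter_subset _ _) (fun S _ hS => by
      have hcard : S.card ≠ p := by simpa [Finset.mem_filter] using hS
      rw [show h (W.wedgeSub φ S) = 0 from hh S.card _ hcard]
      simp)).symm]
  rw [← Finset.sum_filter]
  refine Finset.sum_bij'
    (fun S hS => unshufflePerm S ((Finset.mem_filter.1 hS).2)
      (hq S (Finset.mem_filter.1 hS).2))
    (fun σ _ => Finset.image (fun i : Fin p => σ (Fin.castAdd q i)) Finset.univ)
    ?_ ?_ ?_ ?_ ?_
  · intro S hS
    have hp : S.card = p := (Finset.mem_filter.1 hS).2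
    refine Finset.mem_filter.2 ⟨Finset.mem_univ _, ?_, ?_⟩
    · simp only [unshufflePerm_castAdd]
      exact (S.orderEmbOfFin hp).strictMono
    · simp only [unshufflePerm_natAdd]
      exact ((Sᶜ).orderEmbOfFin (hq S hp)).strictMono
  · intro σ hσ
    have hσ' : IsUnshuffle p q σ := (Finset.mem_filter.1 hσ).2
    refine Finset.mem_filter.2 ⟨Finset.mem_univ _, ?_⟩
    rw [Finset.card_image_of_injective Finset.univ hσ'.1.injective, Finset.card_univ,
      Fintype.card_fin]
  · intro S hS
    simp only [unshufflePerm_castAdd]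
    exact image_orderEmbOfFin S _
  · intro σ hσ
    have hσ' : IsUnshuffle p q σ := (Finset.mem_filter.1 hσ).2
    set S := Finset.image (fun i : Fin p => σ (Fin.castAdd q i)) Finset.univ with hSdef
    have hp : S.card = p := by
      rw [hSdef, Finset.card_image_of_injective Finset.univ hσ'.1.injective, Finset.card_univ,
        Fintype.card_fin]
    have hmem1 : ∀ i : Fin p, σ (Fin.castAdd q i) ∈ S := fun i =>
      Finset.mem_image.2 ⟨i, Finset.mem_univ i, rfl⟩
    have hmem2 : ∀ i : Fin q, σ (Fin.natAdd p i) ∈ Sᶜ := fun i =>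
      Finset.mem_compl.2 ((mem_image_natAdd_iff σ _).1
        (Finset.mem_image.2 ⟨i, Finset.mem_univ i, rfl⟩))
    have e1 : (fun i : Fin p => σ (Fin.castAdd q i)) = ⇑(S.orderEmbOfFin hp) :=
      Finset.orderEmbOfFin_unique hp hmem1 hσ'.1
    have e2 : (fun i : Fin q => σ (Fin.natAdd p i)) = ⇑((Sᶜ).orderEmbOfFin (hq S hp)) :=
      Finset.orderEmbOfFin_unique (hq S hp) hmem2 hσ'.2
    refine Equiv.ext fun x => ?_
    obtain ⟨y, rfl⟩ := finSumFinEquiv.surjective x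
    cases y with
    | inl i =>
      rw [finSumFinEquiv_apply_left, unshufflePerm_castAdd]
      exact (congrFun e1 i).symm
    | inr i =>
      rw [finSumFinEquiv_apply_right, unshufflePerm_natAdd]
      exact (congrFun e2 i).symm
  · intro S hS
    have hp : S.card = p := (Finset.mem_filter.1 hS).2
    simp only [unshufflePerm_castAdd, unshufflePerm_natAdd]
    rw [W.wedgeSub_eq_of_strictMono φ S hp _ (S.orderEmbOfFin hp).strictMono
      (fun i => Finset.orderEmbOfFin_mem S hp i)]
    rw [W.wedgeSub_eq_of_strictMono φ Sᶜ (hq S hp) _ ((Sᶜ).orderEmbOfFin (hq S hp)).strictMono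
      (fun i => Finset.orderEmbOfFin_mem Sᶜ (hq S hp) i)]
end
end

section
/- The Gerstenhaber bracket [f,g] = f∘ḡ − g∘f̄ on Hom(Λ*Φ, Φ), where f̄, ḡ are the coderivations corresponding to f and g, satisfies the Jacobi identity; in other words, the isomorphism h ↦ h̄ from Hom(Λ*Φ,Φ) to Coder(Λ*Φ) transports the commutator Lie bracket of coderivations to the Gerstenhaber bracket. -/
open TensorProduct

noncomputable section

section Aux

variable {A Φ C : Type*} [CommRing A] [AddCommGroup Φ] [Module A Φ]
  [AddCommGroup C] [Module A C] (W : WedgeBialgebra A Φ C)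

lemma aux_p_coderOf (h : C →ₗ[A] Φ) : W.p ∘ₗ W.coderOf h = h := by
  have key : W.p ∘ₗ W.m ∘ₗ LinearMap.rTensor C (W.ι ∘ₗ h)
      = h ∘ₗ (TensorProduct.rid A C).toLinearMap ∘ₗ LinearMap.lTensor C W.ε := by
    apply TensorProduct.ext'
    intro a b
    simp [W.p_mul, W.ε_ι, W.p_ι, TensorProduct.smul_tmul']
  ext x
  have := W.counit_right x
  calc W.p (W.coderOf h x)
      = (W.p ∘ₗ W.m ∘ₗ LinearMap.rTensor C (W.ι ∘ₗ h)) (W.Δ x) := rfl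
    _ = h ((TensorProduct.rid A C) ((LinearMap.lTensor C W.ε) (W.Δ x))) := by rw [key]; rfl
    _ = h x := by rw [this]

lemma aux_coderOf_isCoderivation (h : C →ₗ[A] Φ) :
    IsCoderivation W.Δ (W.coderOf h) := by
  classical
  set J : C ⊗[A] C →ₗ[A] C ⊗[A] C := LinearMap.rTensor C (W.ι ∘ₗ h) with hJ
  set T' : C →ₗ[A] C ⊗[A] (C ⊗[A] C) := LinearMap.lTensor C W.Δ ∘ₗ W.Δ with hT'
  set σ : C ⊗[A] (C ⊗[A] C) →ₗ[A] C ⊗[A] (C ⊗[A] C) :=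
    (TensorProduct.assoc A C C C).toLinearMap ∘ₗ
      LinearMap.rTensor C (TensorProduct.comm A C C).toLinearMap ∘ₗ
      (TensorProduct.assoc A C C C).symm.toLinearMap with hσ
  have hT : LinearMap.rTensor C W.Δ ∘ₗ W.Δ
      = (TensorProduct.assoc A C C C).symm.toLinearMap ∘ₗ T' := by
    rw [hT', ← W.coassoc]
    ext x
    simp
  have hσT : σ ∘ₗ T' = T' := by
    have h1 : (TensorProduct.assoc A C C C).symm.toLinearMap ∘ₗ T'
        = LinearMap.rTensor C W.Δ ∘ₗ W.Δ := hT.symm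
    calc σ ∘ₗ T'
        = (TensorProduct.assoc A C C C).toLinearMap ∘ₗ
            LinearMap.rTensor C (TensorProduct.comm A C C).toLinearMap ∘ₗ
            (LinearMap.rTensor C W.Δ ∘ₗ W.Δ) := by
          rw [hσ]; simp only [LinearMap.comp_assoc]; rw [h1]
      _ = (TensorProduct.assoc A C C C).toLinearMap ∘ₗ
            LinearMap.rTensor C ((TensorProduct.comm A C C).toLinearMap ∘ₗ W.Δ) ∘ₗ W.Δ := by
          rw [LinearMap.rTensor_comp, LinearMap.comp_assoc]
      _ = (TensorProduct.assoc A C C C).toLinearMap ∘ₗ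
            LinearMap.rTensor C W.Δ ∘ₗ W.Δ := by rw [W.cocomm]
      _ = T' := by
          rw [hT', ← W.coassoc]
  have hmulc := W.mul_compat
  set P : C ⊗[A] (C ⊗[A] C) →ₗ[A] C ⊗[A] C :=
    (TensorProduct.map W.m W.m) ∘ₗ
      (TensorProduct.tensorTensorTensorComm A C C C C).toLinearMap ∘ₗ
      LinearMap.rTensor (C ⊗[A] C) (W.Δ ∘ₗ W.ι ∘ₗ h) with hP
  have hLHS : W.Δ ∘ₗ W.coderOf h = P ∘ₗ T' := by
    show W.Δ ∘ₗ (W.m ∘ₗ J ∘ₗ W.Δ) = P ∘ₗ T'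
    rw [← LinearMap.comp_assoc, ← LinearMap.comp_assoc, hmulc]
    rw [hP, hT', hJ]
    have key : (TensorProduct.map W.Δ W.Δ) ∘ₗ LinearMap.rTensor C (W.ι ∘ₗ h)
        = LinearMap.rTensor (C ⊗[A] C) (W.Δ ∘ₗ W.ι ∘ₗ h) ∘ₗ LinearMap.lTensor C W.Δ := by
      apply TensorProduct.ext'
      intro a b
      simp
    simp only [LinearMap.comp_assoc, key]
  set Q₁ : C ⊗[A] (C ⊗[A] C) →ₗ[A] C ⊗[A] C :=
    LinearMap.rTensor C (W.m ∘ₗ J) ∘ₗ (TensorProduct.assoc A C C C).symm.toLinearMap with hQ₁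
  set Q₂ : C ⊗[A] (C ⊗[A] C) →ₗ[A] C ⊗[A] C := LinearMap.lTensor C (W.m ∘ₗ J) with hQ₂
  have hR1 : LinearMap.rTensor C (W.coderOf h) ∘ₗ W.Δ = Q₁ ∘ₗ T' := by
    show LinearMap.rTensor C (W.m ∘ₗ J ∘ₗ W.Δ) ∘ₗ W.Δ = Q₁ ∘ₗ T'
    rw [show W.m ∘ₗ J ∘ₗ W.Δ = (W.m ∘ₗ J) ∘ₗ W.Δ from rfl, LinearMap.rTensor_comp,
      LinearMap.comp_assoc, hT, hQ₁, LinearMap.comp_assoc]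
  have hR2 : LinearMap.lTensor C (W.coderOf h) ∘ₗ W.Δ = (Q₂ ∘ₗ σ) ∘ₗ T' := by
    show LinearMap.lTensor C (W.m ∘ₗ J ∘ₗ W.Δ) ∘ₗ W.Δ = (Q₂ ∘ₗ σ) ∘ₗ T'
    rw [show W.m ∘ₗ J ∘ₗ W.Δ = (W.m ∘ₗ J) ∘ₗ W.Δ from rfl, LinearMap.lTensor_comp,
      LinearMap.comp_assoc, ← hT', hQ₂, LinearMap.comp_assoc, hσT]
  have hPQ : P = Q₁ + Q₂ ∘ₗ σ := by
    apply TensorProduct.ext'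
    intro a y
    induction y using TensorProduct.induction_on with
    | zero => simp
    | tmul b c =>
      simp only [hP, hQ₁, hQ₂, hσ, LinearMap.add_apply, LinearMap.comp_apply,
        LinearMap.rTensor_tmul, LinearMap.lTensor_tmul,
        LinearEquiv.coe_coe, TensorProduct.assoc_symm_tmul, TensorProduct.assoc_tmul,
        TensorProduct.comm_tmul, W.Δ_ι]
      rw [TensorProduct.add_tmul]
      simp [W.one_mul, W.mul_one, TensorProduct.tensorTensorTensorComm_tmul, hJ]
    | add y z hy hz =>
      simp only [TensorProduct.tmul_add, map_add] at *
      rw [hy, hz]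
  rw [IsCoderivation, hLHS, hPQ]
  simp only [LinearMap.add_comp]
  rw [hR1, hR2]

lemma aux_isCoderivation_sub {Θ₁ Θ₂ : C →ₗ[A] C} (h₁ : IsCoderivation W.Δ Θ₁)
    (h₂ : IsCoderivation W.Δ Θ₂) : IsCoderivation W.Δ (Θ₁ - Θ₂) := by
  unfold IsCoderivation at *
  rw [LinearMap.comp_sub, h₁, h₂, LinearMap.rTensor_sub, LinearMap.lTensor_sub,
    ← LinearMap.sub_comp]
  congr 1
  abel

lemma aux_isCoderivation_comm {Θ₁ Θ₂ : C →ₗ[A] C} (h₁ : IsCoderivation W.Δ Θ₁)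
    (h₂ : IsCoderivation W.Δ Θ₂) :
    IsCoderivation W.Δ (Θ₁ ∘ₗ Θ₂ - Θ₂ ∘ₗ Θ₁) := by
  unfold IsCoderivation at *
  have e1 : W.Δ ∘ₗ (Θ₁ ∘ₗ Θ₂) =
      ((LinearMap.rTensor C Θ₁ + LinearMap.lTensor C Θ₁) ∘ₗ
        (LinearMap.rTensor C Θ₂ + LinearMap.lTensor C Θ₂)) ∘ₗ W.Δ := by
    rw [← LinearMap.comp_assoc, h₁, LinearMap.comp_assoc, h₂, ← LinearMap.comp_assoc]
  have e2 : W.Δ ∘ₗ (Θ₂ ∘ₗ Θ₁) =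
      ((LinearMap.rTensor C Θ₂ + LinearMap.lTensor C Θ₂) ∘ₗ
        (LinearMap.rTensor C Θ₁ + LinearMap.lTensor C Θ₁)) ∘ₗ W.Δ := by
    rw [← LinearMap.comp_assoc, h₂, LinearMap.comp_assoc, h₁, ← LinearMap.comp_assoc]
  rw [LinearMap.comp_sub, e1, e2, ← LinearMap.sub_comp]
  congr 1
  simp only [LinearMap.add_comp, LinearMap.comp_add, LinearMap.rTensor_sub,
    LinearMap.lTensor_sub, ← LinearMap.rTensor_comp, ← LinearMap.lTensor_comp]
  have c12 : LinearMap.rTensor C Θ₁ ∘ₗ LinearMap.lTensor C Θ₂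
      = LinearMap.lTensor C Θ₂ ∘ₗ LinearMap.rTensor C Θ₁ := by
    apply TensorProduct.ext'; intro a b; simp
  have c21 : LinearMap.rTensor C Θ₂ ∘ₗ LinearMap.lTensor C Θ₁
      = LinearMap.lTensor C Θ₁ ∘ₗ LinearMap.rTensor C Θ₂ := by
    apply TensorProduct.ext'; intro a b; simp
  rw [c12, c21]
  abel

lemma aux_coderOf_gbracket (f g : C →ₗ[A] Φ) :
    W.coderOf (W.gbracket f g) = W.coderOf f ∘ₗ W.coderOf g - W.coderOf g ∘ₗ W.coderOf f := by
  have h1 := aux_coderOf_isCoderivation W (W.gbracket f g)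
  have h2 := aux_isCoderivation_comm W (aux_coderOf_isCoderivation W f)
    (aux_coderOf_isCoderivation W g)
  have hsub := aux_isCoderivation_sub W h1 h2
  have hp : W.p ∘ₗ (W.coderOf (W.gbracket f g) -
      (W.coderOf f ∘ₗ W.coderOf g - W.coderOf g ∘ₗ W.coderOf f)) = 0 := by
    simp only [LinearMap.comp_sub, aux_p_coderOf, ← LinearMap.comp_assoc, aux_p_coderOf]
    simp [WedgeBialgebra.gbracket, WedgeBialgebra.gcomp]
  have := W.cofree_coder _ hsub hp
  exact sub_eq_zero.mp this

end Aux

/-- The Gerstenhaber bracket `[f,g] = f∘ḡ − g∘f̄` on `Hom(Λ*Φ,Φ)`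
satisfies the Jacobi identity; moreover `h ↦ h̄` transports the commutator bracket
of coderivations to the Gerstenhaber bracket. -/
theorem gerstenhaber_jacobi (A Φ C : Type*) [CommRing A] [AddCommGroup Φ]
    [Module A Φ] [AddCommGroup C] [Module A C] (W : WedgeBialgebra A Φ C) :
    (∀ f g h : C →ₗ[A] Φ,
      W.gbracket (W.gbracket f g) h + W.gbracket (W.gbracket g h) f +
        W.gbracket (W.gbracket h f) g = 0) ∧
    (∀ f g : C →ₗ[A] Φ,
      W.coderOf (W.gbracket f g) = W.coderOf f ∘ₗ W.coderOf g - W.coderOf g ∘ₗ W.coderOf f) := by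
  constructor
  · intro f g h
    have e : ∀ u v : C →ₗ[A] Φ,
        W.coderOf (u ∘ₗ W.coderOf v - v ∘ₗ W.coderOf u)
          = W.coderOf u ∘ₗ W.coderOf v - W.coderOf v ∘ₗ W.coderOf u :=
      fun u v => aux_coderOf_gbracket W u v
    simp only [WedgeBialgebra.gbracket, WedgeBialgebra.gcomp, e,
      LinearMap.sub_comp, LinearMap.comp_sub, LinearMap.comp_assoc]
    abel
  · exact aux_coderOf_gbracket W
end
end

section
/- Let δ: Ξ → Hom(Λ*Φ, Φ) be k-linear, let δ̂: Hom_k(Λ*Φ, Ξ) → Hom(Λ*Φ, Φ) be its extension δ̂(π) = ev∘(δ∘π ⊗ 1)∘Δ, and suppose there exists C: Ξ⊗Ξ → Hom_k(Λ*Φ, Ξ) with [δ(ξ), δ(η)] = δ̂(C(ξ,η)) for all ξ, η ∈ Ξ (BBvD hypothesis). Define [π₁,π₂] = π₁⊙δ̂(π₂) − π₂⊙δ̂(π₁) + Ĉ(π₁,π₂) on Hom_k(Λ*Φ,Ξ), where Ĉ(π₁,π₂) = C∘((π₁⊗π₂)⊗1)∘(Δ⊗1)∘Δ. Then δ̂ preserves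 brackets: δ̂([π₁,π₂]) = [δ̂(π₁), δ̂(π₂)] in the Gerstenhaber Lie algebra Hom(Λ*Φ,Φ). -/
open TensorProduct

noncomputable section

variable {A Φ C Ξ : Type*} [CommRing A] [AddCommGroup Φ] [Module A Φ]
  [AddCommGroup C] [Module A C] [AddCommGroup Ξ] [Module A Ξ]

/-!
Write `∑ B x₁ x₂` for the Sweedler sum `lift B ∘ Δ` of a bilinear map `B` on `Λ*Φ`.
Coassociativity and cocommutativity let one rebracket and reorder the legs of iterated
Sweedler sums freely. Left multiplication by a primitive element is a coderivation, and a
Sweedler sum of coderivations is again one, so every lift `ḡ` is a coderivation; hence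
`δ̂(σ) ⊙ g = δ̂(σ ∘ ḡ) + ∑ δ(σ x₁)(ḡ x₂)`. For `g = δ̂(τ)` the last term is
`∑ (δ(σ x₁) ⊙ δ(τ x₂))(x₃)`. Antisymmetrising in `(π₁, π₂)` and swapping the first two legs
leaves `∑ [δ(π₁ x₁), δ(π₂ x₂)](x₃)`, which the BBvD hypothesis turns into `δ̂(Ĉ(π₁, π₂))`.
-/

namespace TensorProduct

variable {R M N P Q : Type*} [CommSemiring R] [AddCommMonoid M] [AddCommMonoid N]
  [AddCommMonoid P] [AddCommMonoid Q] [Module R M] [Module R N] [Module R P] [Module R Q]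

theorem lift_comp_rTensor (B : N →ₗ[R] P →ₗ[R] Q) (f : M →ₗ[R] N) :
    lift B ∘ₗ LinearMap.rTensor P f = lift (B ∘ₗ f) :=
  ext' fun _ _ => rfl

theorem lift_comp_lTensor (B : M →ₗ[R] N →ₗ[R] Q) (f : P →ₗ[R] N) :
    lift B ∘ₗ LinearMap.lTensor M f = lift (B.compl₂ f) :=
  ext' fun _ _ => rfl

end TensorProduct

namespace WedgeBialgebra

open LinearMap

variable (W : WedgeBialgebra A Φ C) {M N : Type*} [AddCommGroup M] [Module A M]
  [AddCommGroup N] [Module A N]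

/-- `W.liftComul B x = ∑ B x₁ x₂` in Sweedler notation. -/
def liftComul : (C →ₗ[A] C →ₗ[A] M) →ₗ[A] C →ₗ[A] M :=
  lcomp A M W.Δ ∘ₗ TensorProduct.uncurry (RingHom.id A) C C M

theorem liftComul_eq (B : C →ₗ[A] C →ₗ[A] M) : W.liftComul B = lift B ∘ₗ W.Δ :=
  rfl

theorem comp_liftComul (L : M →ₗ[A] N) (B : C →ₗ[A] C →ₗ[A] M) :
    L ∘ₗ W.liftComul B = W.liftComul (B.compr₂ L) := by
  rw [liftComul_eq, liftComul_eq, lift_compr₂, comp_assoc]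

theorem liftComul_comp_liftComul (Q : C →ₗ[A] C →ₗ[A] C →ₗ[A] M) :
    W.liftComul (W.liftComul ∘ₗ Q) = W.liftComul (W.liftComul Q) := by
  set F := lift (TensorProduct.uncurry (RingHom.id A) C C M ∘ₗ Q)
  have hF : lift (W.liftComul ∘ₗ Q) = F ∘ₗ lTensor C W.Δ :=
    TensorProduct.ext' fun _ _ => rfl
  have hF_assoc : F ∘ₗ (TensorProduct.assoc A C C C).toLinearMap = lift (lift Q) :=
    TensorProduct.ext_threefold fun _ _ _ => rfl
  rw [liftComul_eq, liftComul_eq, liftComul_eq, hF, ← lift_comp_rTensor,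
    comp_assoc, ← W.coassoc, ← hF_assoc]
  rfl

theorem liftComul_flip (B : C →ₗ[A] C →ₗ[A] M) : W.liftComul B.flip = W.liftComul B := by
  rw [liftComul_eq, liftComul_eq, ← lift_comp_comm_eq, comp_assoc, W.cocomm]

theorem liftComul_comp_of_isCoderivation {Θ : C →ₗ[A] C} (hΘ : IsCoderivation W.Δ Θ)
    (B : C →ₗ[A] C →ₗ[A] M) :
    W.liftComul B ∘ₗ Θ = W.liftComul (B ∘ₗ Θ) + W.liftComul (B.compl₂ Θ) := by
  rw [liftComul_eq, comp_assoc, hΘ, add_comp, comp_add, ← comp_assoc, ← comp_assoc,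
    lift_comp_rTensor, lift_comp_lTensor]
  rfl

theorem liftComul_mk_comp (f : C →ₗ[A] N) :
    W.liftComul (TensorProduct.mk A N C ∘ₗ f) = rTensor C f ∘ₗ W.Δ :=
  rfl

theorem lTensor_comp_comul (f : C →ₗ[A] N) :
    lTensor C f ∘ₗ W.Δ = (TensorProduct.comm A N C).toLinearMap ∘ₗ rTensor C f ∘ₗ W.Δ := by
  rw [← comm_comp_rTensor_comp_comm_eq, comp_assoc, comp_assoc, W.cocomm]

theorem rTensor_liftComul_comp_comul (P : C →ₗ[A] C →ₗ[A] N) :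
    rTensor C (W.liftComul P) ∘ₗ W.Δ =
      W.liftComul (W.liftComul ∘ₗ P.compr₂ (TensorProduct.mk A N C)) := by
  rw [liftComul_comp_liftComul, ← comp_liftComul, liftComul_mk_comp]

theorem isCoderivation_liftComul (P : C →ₗ[A] C →ₗ[A] C)
    (hP : ∀ a, IsCoderivation W.Δ (P a)) : IsCoderivation W.Δ (W.liftComul P) := by
  set R := W.liftComul ∘ₗ P.compr₂ (TensorProduct.mk A C C)
  have hR : P.compr₂ W.Δ = R + R.compr₂ (TensorProduct.comm A C C).toLinearMap := by
    ext a : 1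
    have hRa : R a = rTensor C (P a) ∘ₗ W.Δ := W.liftComul_mk_comp (P a)
    change W.Δ ∘ₗ P a = R a + (TensorProduct.comm A C C).toLinearMap ∘ₗ R a
    rw [hP a, add_comp, lTensor_comp_comul, hRa]
  rw [IsCoderivation, comp_liftComul, hR, map_add, ← comp_liftComul,
    ← rTensor_liftComul_comp_comul, add_comp, lTensor_comp_comul]

def lmul : C →ₗ[A] C →ₗ[A] C := (TensorProduct.mk A C C).compr₂ W.m

theorem isCoderivation_lmul {p : C} (hp : W.Δ p = p ⊗ₜ W.one + W.one ⊗ₜ p) :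
    IsCoderivation W.Δ (W.lmul p) := by
  ext x
  have hmul := LinearMap.congr_fun W.mul_compat (p ⊗ₜ x)
  simp only [comp_apply, TensorProduct.map_tmul, hp] at hmul
  simp only [comp_apply, lmul, compr₂_apply, TensorProduct.mk_apply, hmul]
  induction W.Δ x using TensorProduct.induction_on with
  | zero => simp
  | tmul u v => simp [TensorProduct.add_tmul, W.one_mul]
  | add u v hu hv => simp only [TensorProduct.tmul_add, map_add, hu, hv]

theorem coderOf_eq_liftComul (g : C →ₗ[A] Φ) :
    W.coderOf g = W.liftComul (W.lmul ∘ₗ W.ι ∘ₗ g) := by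
  rw [coderOf, liftComul_eq, ← lift_comp_rTensor, lmul,
    lift_mk_compr₂, comp_assoc]

theorem isCoderivation_coderOf (g : C →ₗ[A] Φ) : IsCoderivation W.Δ (W.coderOf g) := by
  rw [coderOf_eq_liftComul]
  exact W.isCoderivation_liftComul _ fun a => W.isCoderivation_lmul (W.Δ_ι (g a))

def coderOfₗ : (C →ₗ[A] Φ) →ₗ[A] C →ₗ[A] C :=
  W.liftComul ∘ₗ llcomp A C Φ (C →ₗ[A] C) (W.lmul ∘ₗ W.ι)

theorem coderOfₗ_apply (g : C →ₗ[A] Φ) : W.coderOfₗ g = W.coderOf g :=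
  (W.coderOf_eq_liftComul g).symm

theorem coderOf_liftComul (P : C →ₗ[A] C →ₗ[A] Φ) :
    W.coderOf (W.liftComul P) = W.liftComul (W.coderOfₗ ∘ₗ P) := by
  rw [coderOf_eq_liftComul, ← comp_assoc, comp_liftComul, ← liftComul_comp_liftComul]
  rfl

def gcompₗ : (C →ₗ[A] Φ) →ₗ[A] (C →ₗ[A] Φ) →ₗ[A] C →ₗ[A] Φ :=
  (llcomp A C C Φ).compl₂ W.coderOfₗ

theorem gcompₗ_apply (f g : C →ₗ[A] Φ) : W.gcompₗ f g = W.gcomp f g :=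
  congrArg (f ∘ₗ ·) (W.coderOfₗ_apply g)

theorem liftComul_comp_coderOf_liftComul (P R : C →ₗ[A] C →ₗ[A] Φ) :
    W.liftComul P ∘ₗ W.coderOf (W.liftComul R) =
      W.liftComul (P ∘ₗ W.coderOf (W.liftComul R)) +
        W.liftComul (W.liftComul ((W.gcompₗ ∘ₗ P).compl₂ R)) := by
  rw [W.liftComul_comp_of_isCoderivation (W.isCoderivation_coderOf _)]
  congr 1
  rw [coderOf_liftComul, ← liftComul_comp_liftComul]
  congr 1
  ext a : 1
  exact W.comp_liftComul (P a) _

section Parameters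

variable {Ξ : Type*} [AddCommGroup Ξ] [Module A Ξ] (δ : Ξ →ₗ[A] C →ₗ[A] Φ)

def deltaHatₗ : (C →ₗ[A] Ξ) →ₗ[A] C →ₗ[A] Φ :=
  W.liftComul ∘ₗ llcomp A C Ξ (C →ₗ[A] Φ) δ

theorem deltaHatₗ_apply (π : C →ₗ[A] Ξ) : W.deltaHatₗ δ π = W.deltaHat δ π :=
  rfl

theorem cHat_eq_liftComul (Cm : Ξ →ₗ[A] Ξ →ₗ[A] C →ₗ[A] Ξ) (π₁ π₂ : C →ₗ[A] Ξ) :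
    W.cHat Cm π₁ π₂ = W.liftComul (W.liftComul ((Cm ∘ₗ π₁).compl₂ π₂)) := by
  rw [cHat, liftComul_eq, liftComul_eq, ← lift_comp_rTensor, comp_assoc]

theorem deltaHat_liftComul_liftComul (K : C →ₗ[A] C →ₗ[A] C →ₗ[A] Ξ) :
    W.deltaHat δ (W.liftComul (W.liftComul K)) =
      W.liftComul (W.liftComul (K.compr₂ (W.deltaHatₗ δ))) := by
  rw [← comp_liftComul]
  change W.liftComul (δ ∘ₗ W.liftComul (W.liftComul K)) = _
  rw [comp_liftComul, ← liftComul_comp_liftComul]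
  rfl

theorem deltaHat_comp_coderOf_deltaHat (σ τ : C →ₗ[A] Ξ) :
    W.deltaHat δ σ ∘ₗ W.coderOf (W.deltaHat δ τ) =
      W.deltaHat δ (σ ∘ₗ W.coderOf (W.deltaHat δ τ)) +
        W.liftComul (W.liftComul ((W.gcompₗ ∘ₗ δ ∘ₗ σ).compl₂ (δ ∘ₗ τ))) :=
  W.liftComul_comp_coderOf_liftComul (δ ∘ₗ σ) (δ ∘ₗ τ)

theorem deltaHat_cHat {Cm : Ξ →ₗ[A] Ξ →ₗ[A] C →ₗ[A] Ξ}
    (hBBvD : ∀ ξ η : Ξ, W.gbracket (δ ξ) (δ η) = W.deltaHat δ (Cm ξ η)) (π₁ π₂ : C →ₗ[A] Ξ) :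
    W.deltaHat δ (W.cHat Cm π₁ π₂) =
      W.liftComul (W.liftComul ((W.gcompₗ ∘ₗ δ ∘ₗ π₁).compl₂ (δ ∘ₗ π₂))) -
        W.liftComul (W.liftComul ((W.gcompₗ ∘ₗ δ ∘ₗ π₂).compl₂ (δ ∘ₗ π₁))) := by
  rw [cHat_eq_liftComul, deltaHat_liftComul_liftComul,
    ← W.liftComul_flip ((W.gcompₗ ∘ₗ δ ∘ₗ π₂).compl₂ (δ ∘ₗ π₁)), ← map_sub, ← map_sub]
  congr 2
  refine LinearMap.ext fun a => LinearMap.ext fun b => ?_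
  simp only [compr₂_apply, compl₂_apply, comp_apply, LinearMap.sub_apply, flip_apply,
    deltaHatₗ_apply, gcompₗ_apply, ← hBBvD, gbracket]

end Parameters

end WedgeBialgebra

/-- Under the BBvD hypothesis, the map `δ̂` preserves brackets:
`δ̂([π₁,π₂]) = [δ̂(π₁), δ̂(π₂)]` in the Gerstenhaber Lie algebra `Hom(Λ*Φ,Φ)`. -/
theorem deltaHat_preserves_brackets (W : WedgeBialgebra A Φ C)
    (δ : Ξ →ₗ[A] (C →ₗ[A] Φ)) (Cm : Ξ →ₗ[A] Ξ →ₗ[A] (C →ₗ[A] Ξ))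
    (hBBvD : ∀ ξ η : Ξ, W.gbracket (δ ξ) (δ η) = W.deltaHat δ (Cm ξ η)) :
    ∀ π₁ π₂ : C →ₗ[A] Ξ,
      W.deltaHat δ (W.parBracket δ Cm π₁ π₂) =
        W.gbracket (W.deltaHat δ π₁) (W.deltaHat δ π₂) := by
  intro π₁ π₂
  rw [WedgeBialgebra.gbracket, WedgeBialgebra.gcomp, WedgeBialgebra.gcomp,
    W.deltaHat_comp_coderOf_deltaHat, W.deltaHat_comp_coderOf_deltaHat,
    WedgeBialgebra.parBracket, ← WedgeBialgebra.deltaHatₗ_apply, map_add, map_sub]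
  simp only [WedgeBialgebra.deltaHatₗ_apply, W.deltaHat_cHat δ hBBvD]
  abel
end
end
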